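/- If t is a positive integer with t ≡ 3 or 11 (mod 12), then c₃(t) = (t³ − 16t² + 73t − 102)/6. -/

import Mathlib

/-- A 3×3 magic square with entries bounded above (strictly) by `t`: pairwise distinct
positive integer entries less than `t`, with all row sums, column sums, and both main
diagonal sums equal to one another. -/
def IsBoundedMagicSquare3 (t : ℕ) (M : Matrix (Fin 3) (Fin 3) ℕ) : Prop :=
  (∀ i j, 0 < M i j ∧ M i j < t) ∧
  (Function.Injective fun p : Fin 3 × Fin 3 => M p.1 p.2) ∧
  ∃ s, (∀ i, ∑ j, M i j = s) ∧ (∀ j, ∑ i, M i j = s) ∧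
    M 0 0 + M 1 1 + M 2 2 = s ∧ M 0 2 + M 1 1 + M 2 0 = s

/-- The number of 3×3 magic squares all of whose entries are less than `t`. -/
noncomputable def c3 (t : ℕ) : ℕ :=
  Set.ncard {M : Matrix (Fin 3) (Fin 3) ℕ | IsBoundedMagicSquare3 t M}


/-!
By Lucas' parametrization every 3×3 magic square is
`c + [[a, -a-b, b], [-a+b, 0, a-b], [-b, a+b, -a]]`. Its entries are distinct iff `|a|, |b|` are
nonzero, distinct and neither is twice the other, and they lie in `[1, t - 1]` iff
`|a| + |b| < c < t - |a| - |b|`. Counting the admissible centres `c` gives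
`c₃(t) = ∑ (t - 1 - 2(|a| + |b|))⁺` over the admissible pairs, which by the symmetries `a ↦ -a`,
`b ↦ -b` is four times the sum over positive `a, b`. For `t = 2N + 1` this is `8 ∑ (N - a - b)⁺`
over the positive quadrant minus the lines `a = b`, `b = 2a`, `a = 2b`. The quadrant contributes
`N(N-1)(N-2)/6`; the line sums `∑ (N - 2a)⁺` and `∑ (N - 3a)⁺` are only quasi-polynomial, equal
to `(N-1)²/4` for odd `N` and `(N-1)(N-2)/6` for `3 ∤ N`, and `t ≡ 3, 11 (mod 12)` says exactly
that `N ≡ 1, 5 (mod 6)`.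
-/

open Finset

theorem sum_Icc_eq_of_forall_gt {M : Type*} [AddCommMonoid M] {f : ℕ → M} {m n : ℕ}
    (hmn : m ≤ n) (hf : ∀ a, m < a → f a = 0) :
    ∑ a ∈ Icc 1 n, f a = ∑ a ∈ Icc 1 m, f a := by
  refine (sum_subset (Icc_subset_Icc le_rfl hmn) fun a ha ha' => hf a ?_).symm
  simp only [mem_Icc, not_and, not_le] at ha ha'
  omega

theorem sum_Icc_neg_natAbs {M : Type*} [AddCommMonoid M] (f : ℕ → M) (hf : f 0 = 0) (n : ℕ) :
    ∑ a ∈ Icc (-n : ℤ) n, f a.natAbs = 2 • ∑ a ∈ Icc 1 n, f a := by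
  induction n with
  | zero => simp [hf]
  | succ n ih =>
    have hIcc : Icc (-(n + 1 : ℕ) : ℤ) (n + 1 : ℕ) =
        insert (-(n + 1 : ℤ)) (insert (n + 1 : ℤ) (Icc (-n : ℤ) n)) := by
      ext
      simp only [mem_Icc, mem_insert]
      omega
    rw [hIcc, sum_insert (by simp only [mem_Icc, mem_insert]; omega),
      sum_insert (by simp only [mem_Icc]; omega), ih, sum_Icc_succ_top (by omega)]
    have h₁ : (-(n + 1 : ℤ)).natAbs = n + 1 := by omega
    have h₂ : (n + 1 : ℤ).natAbs = n + 1 := by omega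
    rw [h₁, h₂, smul_add, two_smul]
    abel

theorem sum_Icc_neg_natAbs_product {M : Type*} [AddCommMonoid M] (g : ℕ → ℕ → M)
    (hg₁ : ∀ y, g 0 y = 0) (hg₂ : ∀ x, g x 0 = 0) (n : ℕ) :
    ∑ p ∈ Icc (-n : ℤ) n ×ˢ Icc (-n : ℤ) n, g p.1.natAbs p.2.natAbs =
      4 • ∑ a ∈ Icc 1 n, ∑ b ∈ Icc 1 n, g a b := by
  have fold₁ (y : ℕ) : ∑ a ∈ Icc (-n : ℤ) n, g a.natAbs y = 2 • ∑ a ∈ Icc 1 n, g a y :=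
    sum_Icc_neg_natAbs (g · y) (hg₁ y) n
  have fold₂ (x : ℕ) : ∑ b ∈ Icc (-n : ℤ) n, g x b.natAbs = 2 • ∑ b ∈ Icc 1 n, g x b :=
    sum_Icc_neg_natAbs (g x) (hg₂ x) n
  rw [sum_product, sum_comm]
  simp_rw [fold₁, ← smul_sum]
  rw [sum_comm]
  simp_rw [fold₂, ← smul_sum, smul_smul]
  rfl

theorem two_mul_sum_Icc_sub_mul (A d : ℕ) {q : ℕ} (h : d * q ≤ A) :
    2 * ∑ a ∈ Icc 1 q, (A - d * a) + d * q * (q + 1) = 2 * A * q := by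
  induction q with
  | zero => simp
  | succ q ih =>
    have ih := ih (le_trans (Nat.mul_le_mul_left d q.le_succ) h)
    rw [sum_Icc_succ_top (by omega)]
    zify [h] at ih ⊢
    linear_combination ih

theorem two_mul_sum_Icc_tsub_mul {A d q : ℕ} (n : ℕ) (hq : q ≤ n) (h₁ : d * q ≤ A)
    (h₂ : A ≤ d * (q + 1)) :
    2 * ∑ a ∈ Icc 1 n, (A - d * a) + d * q * (q + 1) = 2 * A * q := by
  rw [sum_Icc_eq_of_forall_gt hq fun a ha => ?_]
  · exact two_mul_sum_Icc_sub_mul A d h₁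
  · have := Nat.mul_le_mul_left d (show q + 1 ≤ a by omega)
    omega

theorem six_mul_sum_Icc_sub_sq (N : ℕ) {q : ℕ} (h : q ≤ N) :
    6 * ∑ a ∈ Icc 1 q, (N - a) ^ 2 + 6 * N * q * (q + 1) =
      6 * q * N ^ 2 + q * (q + 1) * (2 * q + 1) := by
  induction q with
  | zero => simp
  | succ q ih =>
    rw [sum_Icc_succ_top (by omega)]
    zify [h] at ih ⊢
    linear_combination ih (by omega)

theorem six_mul_sum_Icc_Icc_tsub (N n : ℕ) (h : N ≤ n) :
    6 * ∑ a ∈ Icc 1 n, ∑ b ∈ Icc 1 n, (N - (a + b)) + 3 * N ^ 2 = N ^ 3 + 2 * N := by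
  have inner (a : ℕ) : 2 * ∑ b ∈ Icc 1 n, (N - (a + b)) + (N - a) = (N - a) ^ 2 := by
    have := two_mul_sum_Icc_tsub_mul (A := N - a) (d := 1) (q := N - a) n (by omega)
      (by omega) (by omega)
    simp only [one_mul, Nat.sub_sub] at this
    linarith
  have total : 2 * ∑ a ∈ Icc 1 n, ∑ b ∈ Icc 1 n, (N - (a + b)) + ∑ a ∈ Icc 1 n, (N - a) =
      ∑ a ∈ Icc 1 n, (N - a) ^ 2 := by
    rw [mul_sum, ← sum_add_distrib]
    exact sum_congr rfl fun a _ => inner a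
  have linear := two_mul_sum_Icc_tsub_mul (A := N) (d := 1) (q := N) n h (by omega) (by omega)
  simp only [one_mul] at linear
  have squares := six_mul_sum_Icc_sub_sq N le_rfl
  rw [← sum_Icc_eq_of_forall_gt h fun a ha => by simp [Nat.sub_eq_zero_of_le ha.le]] at squares
  linarith

namespace MagicSquare3

/-- Lucas' parametrization of the 3×3 magic squares. -/
def lucas (c a b : ℤ) : Matrix (Fin 3) (Fin 3) ℤ :=
  !![c + a, c - a - b, c + b; c - a + b, c, c + a - b; c - b, c + a + b, c - a]

def DistinctOffsets (x y : ℕ) : Prop :=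
  x ≠ 0 ∧ y ≠ 0 ∧ x ≠ y ∧ y ≠ 2 * x ∧ x ≠ 2 * y

instance (x y : ℕ) : Decidable (DistinctOffsets x y) := by
  unfold DistinctOffsets
  infer_instance

def Admissible (t : ℕ) (c a b : ℤ) : Prop :=
  DistinctOffsets a.natAbs b.natAbs ∧ a.natAbs + b.natAbs < c ∧ c + a.natAbs + b.natAbs < t

theorem injective_lucas_iff {c a b : ℤ} :
    Function.Injective (fun p : Fin 3 × Fin 3 => lucas c a b p.1 p.2) ↔
      DistinctOffsets a.natAbs b.natAbs := by
  constructor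
  · intro h
    have ne (p q : Fin 3 × Fin 3) (hpq : p ≠ q) : lucas c a b p.1 p.2 ≠ lucas c a b q.1 q.2 :=
      fun e => hpq (h e)
    have h₁ := ne (0, 0) (1, 1) (by decide)
    have h₂ := ne (0, 2) (1, 1) (by decide)
    have h₃ := ne (0, 0) (0, 2) (by decide)
    have h₄ := ne (0, 0) (2, 0) (by decide)
    have h₅ := ne (0, 0) (1, 0) (by decide)
    have h₆ := ne (0, 0) (0, 1) (by decide)
    have h₇ := ne (0, 2) (1, 2) (by decide)
    have h₈ := ne (0, 2) (0, 1) (by decide)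
    simp only [lucas, Matrix.of_apply, Matrix.cons_val', Matrix.cons_val_zero,
      Matrix.cons_val_one, Matrix.cons_val, Matrix.cons_val_fin_one, Fin.isValue]
      at h₁ h₂ h₃ h₄ h₅ h₆ h₇ h₈
    unfold DistinctOffsets
    omega
  · rintro ⟨h₁, h₂, h₃, h₄, h₅⟩ ⟨i, j⟩ ⟨k, l⟩ h
    fin_cases i <;> fin_cases j <;> fin_cases k <;> fin_cases l <;>
      simp only [lucas, Matrix.of_apply, Matrix.cons_val', Matrix.cons_val_zero,
        Matrix.cons_val_one, Matrix.cons_val, Matrix.cons_val_fin_one, Fin.isValue, Fin.zero_eta,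
        Fin.mk_one, Fin.reduceFinMk, Prod.mk.injEq, Fin.reduceEq, and_self, and_false, and_true,
        zero_ne_one, one_ne_zero] at h ⊢ <;>
      omega

theorem bounded_lucas_iff {t : ℕ} {c a b : ℤ} :
    (∀ i j, 0 < lucas c a b i j ∧ lucas c a b i j < t) ↔
      a.natAbs + b.natAbs < c ∧ c + a.natAbs + b.natAbs < t := by
  constructor
  · intro h
    have h₁ := h 0 1
    have h₂ := h 1 0
    have h₃ := h 2 1
    have h₄ := h 1 2
    simp only [lucas, Matrix.of_apply, Matrix.cons_val', Matrix.cons_val_zero,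
      Matrix.cons_val_one, Matrix.cons_val, Matrix.cons_val_fin_one, Fin.isValue] at h₁ h₂ h₃ h₄
    omega
  · intro h i j
    fin_cases i <;> fin_cases j <;>
      simp only [lucas, Matrix.of_apply, Matrix.cons_val', Matrix.cons_val_zero,
        Matrix.cons_val_one, Matrix.cons_val, Matrix.cons_val_fin_one, Fin.isValue, Fin.zero_eta,
        Fin.mk_one, Fin.reduceFinMk] <;>
      omega

theorem lucas_sums_eq (c a b : ℤ) :
    (∀ i, ∑ j, lucas c a b i j = 3 * c) ∧ (∀ j, ∑ i, lucas c a b i j = 3 * c) ∧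
      lucas c a b 0 0 + lucas c a b 1 1 + lucas c a b 2 2 = 3 * c ∧
      lucas c a b 0 2 + lucas c a b 1 1 + lucas c a b 2 0 = 3 * c := by
  refine ⟨fun i => ?_, fun j => ?_, ?_, ?_⟩
  · fin_cases i <;>
      simp only [lucas, Matrix.of_apply, Matrix.cons_val', Matrix.cons_val_zero,
        Matrix.cons_val_one, Matrix.cons_val, Matrix.cons_val_fin_one, Fin.isValue, Fin.zero_eta,
        Fin.mk_one, Fin.reduceFinMk, Fin.sum_univ_three] <;>
      ring
  · fin_cases j <;>
      simp only [lucas, Matrix.of_apply, Matrix.cons_val', Matrix.cons_val_zero,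
        Matrix.cons_val_one, Matrix.cons_val, Matrix.cons_val_fin_one, Fin.isValue, Fin.zero_eta,
        Fin.mk_one, Fin.reduceFinMk, Fin.sum_univ_three] <;>
      ring
  all_goals
    simp only [lucas, Matrix.of_apply, Matrix.cons_val', Matrix.cons_val_zero,
      Matrix.cons_val_one, Matrix.cons_val, Matrix.cons_val_fin_one, Fin.isValue]
    ring

/-- Adding the middle row, the middle column and both diagonals counts the centre four times and
every other entry once, so the centre is a third of the magic sum. -/
theorem map_cast_eq_lucas {M : Matrix (Fin 3) (Fin 3) ℕ} {s : ℕ}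
    (hrow : ∀ i, ∑ j, M i j = s) (hcol : ∀ j, ∑ i, M i j = s)
    (hdiag : M 0 0 + M 1 1 + M 2 2 = s) (hanti : M 0 2 + M 1 1 + M 2 0 = s) :
    M.map (↑) = lucas (M 1 1) (M 0 0 - M 1 1) (M 0 2 - M 1 1) := by
  have r₀ := hrow 0
  have r₁ := hrow 1
  have r₂ := hrow 2
  have c₀ := hcol 0
  have c₁ := hcol 1
  have c₂ := hcol 2
  simp only [Fin.sum_univ_three] at r₀ r₁ r₂ c₀ c₁ c₂
  ext i j
  fin_cases i <;> fin_cases j <;>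
    simp only [lucas, Matrix.of_apply, Matrix.cons_val', Matrix.cons_val_zero,
      Matrix.cons_val_one, Matrix.cons_val, Matrix.cons_val_fin_one, Fin.isValue, Fin.zero_eta,
      Fin.mk_one, Fin.reduceFinMk, Matrix.map_apply] <;>
    omega

theorem isBoundedMagicSquare3_iff {t : ℕ} {M : Matrix (Fin 3) (Fin 3) ℕ} :
    IsBoundedMagicSquare3 t M ↔ ∃ c a b, Admissible t c a b ∧ M.map (↑) = lucas c a b := by
  constructor
  · rintro ⟨hbd, hinj, s, hrow, hcol, hdiag, hanti⟩
    have hM := map_cast_eq_lucas hrow hcol hdiag hanti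
    refine ⟨M 1 1, M 0 0 - M 1 1, M 0 2 - M 1 1,
      ⟨(injective_lucas_iff (c := M 1 1)).1 ?_, bounded_lucas_iff.1 ?_⟩, hM⟩
    · rw [← hM]
      exact Nat.cast_injective.comp hinj
    · rw [← hM]
      intro i j
      simpa using hbd i j
  · rintro ⟨c, a, b, ⟨hd, hb⟩, hM⟩
    have entry (i j) : (M i j : ℤ) = lucas c a b i j := by rw [← hM]; rfl
    obtain ⟨hrow, hcol, hdiag, hanti⟩ := lucas_sums_eq c a b
    refine ⟨fun i j => ?_, fun p q hpq => (injective_lucas_iff (c := c)).2 hd ?_, 3 * M 1 1,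
      fun i => ?_, fun j => ?_, ?_, ?_⟩
    · exact_mod_cast entry i j ▸ bounded_lucas_iff.2 hb i j
    · simpa [entry] using congrArg (Nat.cast : ℕ → ℤ) hpq
    all_goals zify
    all_goals simp only [entry]
    exacts [hrow i, hcol j, hdiag, hanti]

theorem map_cast_map_toNat_lucas {t : ℕ} {c a b : ℤ} (h : Admissible t c a b) :
    ((lucas c a b).map Int.toNat).map (↑) = lucas c a b := by
  ext i j
  simpa using (bounded_lucas_iff.2 h.2 i j).1.le

/-- A triple `(c, a, b)` is stored as `⟨(a, b), c⟩`, so that the triples form a sigma finset over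
the pairs `(a, b)`; the box `[-t, t]²` contains every admissible pair. -/
noncomputable def admissibleTriples (t : ℕ) : Finset ((_ : ℤ × ℤ) × ℤ) :=
  ((Icc (-t : ℤ) t ×ˢ Icc (-t : ℤ) t).filter fun p => DistinctOffsets p.1.natAbs p.2.natAbs).sigma
    fun p => Ioo (p.1.natAbs + p.2.natAbs : ℤ) (t - p.1.natAbs - p.2.natAbs)

theorem mem_admissibleTriples {t : ℕ} {x : (_ : ℤ × ℤ) × ℤ} :
    x ∈ admissibleTriples t ↔ Admissible t x.2 x.1.1 x.1.2 := by
  obtain ⟨⟨a, b⟩, c⟩ := x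
  simp only [admissibleTriples, mem_sigma, mem_filter, mem_product, mem_Icc, mem_Ioo, Admissible]
  constructor
  · rintro ⟨⟨-, hd⟩, h⟩
    exact ⟨hd, by omega, by omega⟩
  · rintro ⟨hd, h⟩
    exact ⟨⟨by omega, hd⟩, by omega, by omega⟩

theorem c3_eq_card_admissibleTriples (t : ℕ) : c3 t = #(admissibleTriples t) := by
  have image : {M | IsBoundedMagicSquare3 t M} =
      (fun x : (_ : ℤ × ℤ) × ℤ => (lucas x.2 x.1.1 x.1.2).map Int.toNat) ''
        ↑(admissibleTriples t) := by
    ext M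
    simp only [Set.mem_ofPred_eq, Set.mem_image, mem_coe, mem_admissibleTriples,
      isBoundedMagicSquare3_iff]
    constructor
    · rintro ⟨c, a, b, h, hM⟩
      exact ⟨⟨(a, b), c⟩, h, by rw [← hM]; ext; simp⟩
    · rintro ⟨⟨⟨a, b⟩, c⟩, h, rfl⟩
      exact ⟨c, a, b, h, map_cast_map_toNat_lucas h⟩
  rw [c3, image, Set.InjOn.ncard_image, Set.ncard_coe_finset]
  rintro ⟨⟨a, b⟩, c⟩ h ⟨⟨a', b'⟩, c'⟩ h' e
  rw [mem_coe, mem_admissibleTriples] at h h'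
  have e := congrArg (Matrix.map · (Nat.cast : ℕ → ℤ)) e
  simp only [map_cast_map_toNat_lucas h, map_cast_map_toNat_lucas h'] at e
  have e₁₁ : c = c' := congrFun (congrFun e 1) 1
  have e₀₀ : c + a = c' + a' := congrFun (congrFun e 0) 0
  have e₀₂ : c + b = c' + b' := congrFun (congrFun e 0) 2
  obtain rfl := e₁₁
  obtain rfl : a = a' := by omega
  obtain rfl : b = b' := by omega
  rfl

theorem card_admissibleTriples (t : ℕ) :
    #(admissibleTriples t) = ∑ p ∈ Icc (-t : ℤ) t ×ˢ Icc (-t : ℤ) t,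
      if DistinctOffsets p.1.natAbs p.2.natAbs then t - 1 - 2 * (p.1.natAbs + p.2.natAbs)
      else 0 := by
  rw [admissibleTriples, card_sigma, sum_filter]
  refine sum_congr rfl fun p _ => ?_
  split_ifs
  · rw [Int.card_Ioo]
    omega
  · rfl

theorem c3_eq_four_mul_sum (t : ℕ) :
    c3 t = 4 * ∑ a ∈ Icc 1 t, ∑ b ∈ Icc 1 t,
      if DistinctOffsets a b then t - 1 - 2 * (a + b) else 0 := by
  rw [c3_eq_card_admissibleTriples, card_admissibleTriples,
    sum_Icc_neg_natAbs_product (fun x y => if DistinctOffsets x y then t - 1 - 2 * (x + y) else 0)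
      (by simp [DistinctOffsets]) (by simp [DistinctOffsets]), smul_eq_mul]

theorem c3_two_mul_add_one (N : ℕ) :
    c3 (2 * N + 1) = 8 * ∑ a ∈ Icc 1 (2 * N + 1), ∑ b ∈ Icc 1 (2 * N + 1),
      if DistinctOffsets a b then N - (a + b) else 0 := by
  rw [c3_eq_four_mul_sum, show (8 : ℕ) = 4 * 2 from rfl, mul_assoc]
  congr 1
  rw [mul_sum]
  refine sum_congr rfl fun a _ => ?_
  rw [mul_sum]
  refine sum_congr rfl fun b _ => ?_
  split_ifs <;> omega

theorem sum_distinctOffsets_add_lines (N n : ℕ) (h : N ≤ n) :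
    ∑ a ∈ Icc 1 n, ∑ b ∈ Icc 1 n, (if DistinctOffsets a b then N - (a + b) else 0) +
      ∑ a ∈ Icc 1 n, (N - 2 * a) + 2 * ∑ a ∈ Icc 1 n, (N - 3 * a) =
    ∑ a ∈ Icc 1 n, ∑ b ∈ Icc 1 n, (N - (a + b)) := by
  have split : ∀ a ∈ Icc 1 n, ∀ b ∈ Icc 1 n, N - (a + b) =
      (if DistinctOffsets a b then N - (a + b) else 0) + (if b = a then N - (a + b) else 0) +
        (if b = 2 * a then N - (a + b) else 0) + (if a = 2 * b then N - (a + b) else 0) := by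
    intro a ha b hb
    simp only [mem_Icc] at ha hb
    split_ifs <;> simp only [DistinctOffsets] at * <;> omega
  have diagonal : ∀ a ∈ Icc 1 n,
      ∑ b ∈ Icc 1 n, (if b = a then N - (a + b) else 0) = N - 2 * a := by
    intro a ha
    rw [sum_ite_eq', if_pos ha, two_mul]
  have line : ∀ a ∈ Icc 1 n,
      ∑ b ∈ Icc 1 n, (if b = 2 * a then N - (a + b) else 0) = N - 3 * a := by
    intro a ha
    rw [sum_ite_eq']
    split_ifs with h2a <;> simp only [mem_Icc] at ha h2a <;> omega
  have line' : ∀ b ∈ Icc 1 n,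
      ∑ a ∈ Icc 1 n, (if a = 2 * b then N - (a + b) else 0) = N - 3 * b := by
    intro b hb
    simpa only [add_comm] using line b hb
  rw [sum_congr rfl fun a ha => sum_congr rfl (split a ha)]
  simp only [sum_add_distrib]
  rw [sum_congr rfl diagonal, sum_congr rfl line,
    sum_comm (f := fun a b : ℕ => if a = 2 * b then N - (a + b) else 0), sum_congr rfl line']
  ring

end MagicSquare3

theorem c3_formula_mod12_3_11_general (t : ℕ) (h : t % 12 = 3 ∨ t % 12 = 11) :
    (c3 t : ℚ) = ((t : ℚ) ^ 3 - 16 * (t : ℚ) ^ 2 + 73 * (t : ℚ) - 102) / 6 := by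
  obtain ⟨m, N, rfl, hN⟩ : ∃ m N, t = 2 * N + 1 ∧ (N = 6 * m + 1 ∨ N = 6 * m + 5) :=
    ⟨t / 12, t / 2, by omega, by omega⟩
  have hc := MagicSquare3.c3_two_mul_add_one N
  have hlines := MagicSquare3.sum_distinctOffsets_add_lines N (2 * N + 1) (by omega)
  have hquadrant := six_mul_sum_Icc_Icc_tsub N (2 * N + 1) (by omega)
  have key : 6 * c3 (2 * N + 1) + 16 * (2 * N + 1) ^ 2 + 102 =
      (2 * N + 1) ^ 3 + 73 * (2 * N + 1) := by
    rcases hN with rfl | rfl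
    · have h₂ := two_mul_sum_Icc_tsub_mul (A := 6 * m + 1) (d := 2) (q := 3 * m)
        (2 * (6 * m + 1) + 1) (by omega) (by omega) (by omega)
      have h₃ := two_mul_sum_Icc_tsub_mul (A := 6 * m + 1) (d := 3) (q := 2 * m)
        (2 * (6 * m + 1) + 1) (by omega) (by omega) (by omega)
      linarith
    · have h₂ := two_mul_sum_Icc_tsub_mul (A := 6 * m + 5) (d := 2) (q := 3 * m + 2)
        (2 * (6 * m + 5) + 1) (by omega) (by omega) (by omega)
      have h₃ := two_mul_sum_Icc_tsub_mul (A := 6 * m + 5) (d := 3) (q := 2 * m + 1)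
        (2 * (6 * m + 5) + 1) (by omega) (by omega) (by omega)
      linarith
  rw [eq_div_iff (by norm_num)]
  have := congrArg (Nat.cast : ℕ → ℚ) key
  push_cast at this ⊢
  linarith

theorem c3_formula_mod12_3_11 (t : ℕ) (ht : 0 < t) (h : t % 12 = 3 ∨ t % 12 = 11) :
    (c3 t : ℚ) = ((t : ℚ) ^ 3 - 16 * (t : ℚ) ^ 2 + 73 * (t : ℚ) - 102) / 6 :=
  c3_formula_mod12_3_11_general t h
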